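/- arXiv:2107.04679 — 2 statements merged into one kernel-verified Lean document; each statement's English description precedes it below -/
import Mathlib

section
/- Let (N, K_min, v) be a minimal incomplete game with total excess Δ ≥ 0. For each i ∈ N, the game v^i (defined by v^i(S) = v(S) if S ∈ K_min; v^i(S) = v(N) − Σ_{j∉S} v({j}) if S ∉ K_min and i ∈ S; v^i(S) = v(N) − Σ_{j∉S} v({j}) − Δ if S ∉ K_min and i ∉ S) is an extreme point of the set C(v) of 1-convex extensions of v, viewed as a subset of ℝ^{2^N}; that is, v^i ∈ C(v) and for every x : 2^N → ℝ, if v^i + x ∈ C(v) and v^i − x ∈ C(v) then x = 0. -/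
noncomputable section

open Finset

/-- The upper (utopia) vector `b^w` of a cooperative game `w` on `N = {1,…,n}`. -/
def bvec (n : ℕ) (w : Finset (Fin n) → ℝ) (i : Fin n) : ℝ :=
  w Finset.univ - w (Finset.univ \ {i})

/-- A cooperative game `w` is 1-convex: for every nonempty coalition `S`,
`w S ≤ w N - b^w(N \ S)`, and `b^w(N) ≥ w N`. -/
def OneConvex (n : ℕ) (w : Finset (Fin n) → ℝ) : Prop :=
  (∀ S : Finset (Fin n), S.Nonempty →
      w S ≤ w Finset.univ - ∑ i ∈ Finset.univ \ S, bvec n w i) ∧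
  w Finset.univ ≤ ∑ i : Fin n, bvec n w i

/-- The set of 1-convex extensions of an incomplete game `(N, K, v)`:
cooperative games (`w ∅ = 0`) that are 1-convex and agree with `v` on `K`. -/
def Cext (n : ℕ) (K : Finset (Finset (Fin n))) (v : Finset (Fin n) → ℝ) :
    Set (Finset (Fin n) → ℝ) :=
  {w | w ∅ = 0 ∧ OneConvex n w ∧ ∀ S ∈ K, w S = v S}

/-- `K_min`: the empty coalition, the grand coalition and all singletons. -/
def KminF (n : ℕ) : Finset (Finset (Fin n)) :=
  {∅, Finset.univ} ∪ Finset.univ.image (fun i => ({i} : Finset (Fin n)))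

/-- The total excess `Δ = v(N) - ∑_{i ∈ N} v({i})`. -/
def totalExcess (n : ℕ) (v : Finset (Fin n) → ℝ) : ℝ :=
  v Finset.univ - ∑ i : Fin n, v {i}

/-- A minimal incomplete game (only the values on `K_min` are relevant) that is
1-convex-extendable, i.e. `v ∅ = 0` and `Δ ≥ 0`. -/
def MinExtendable (n : ℕ) (v : Finset (Fin n) → ℝ) : Prop :=
  v ∅ = 0 ∧ 0 ≤ totalExcess n v

/-- The extreme games `v^i` of the set of 1-convex extensions of a minimal
incomplete game. -/
def extGame (n : ℕ) (v : Finset (Fin n) → ℝ) (i : Fin n) (S : Finset (Fin n)) : ℝ :=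
  if S ∈ KminF n then v S
  else if i ∈ S then v Finset.univ - ∑ j ∈ Finset.univ \ S, v {j}
  else v Finset.univ - ∑ j ∈ Finset.univ \ S, v {j} - totalExcess n v

/-- The upper game of the set of 1-convex extensions of a minimal incomplete game. -/
def upperGameMin (n : ℕ) (v : Finset (Fin n) → ℝ) (S : Finset (Fin n)) : ℝ :=
  if S ∈ KminF n then v S else v Finset.univ - ∑ i ∈ Finset.univ \ S, v {i}

/-- The index set `E = 2^N \ ({∅, N} ∪ {{i}} ∪ {N \ {i}})` of extreme rays. -/
def ESetMin (n : ℕ) : Finset (Finset (Fin n)) :=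
  Finset.univ \
    (KminF n ∪ Finset.univ.image (fun i => Finset.univ \ ({i} : Finset (Fin n))))

/-- The extreme-ray game `e_T`: value `-1` on `T` and `0` elsewhere. -/
def eRay (n : ℕ) (T S : Finset (Fin n)) : ℝ := if S = T then -1 else 0

/-- The centre of gravity `ṽ = (1/n) ∑_i v^i` of the extreme games. -/
def tildeV (n : ℕ) (v : Finset (Fin n) → ℝ) (S : Finset (Fin n)) : ℝ :=
  (∑ i : Fin n, extGame n v i S) / (n : ℝ)

/-- The centre of gravity `ẽ = (1/|E|) ∑_{T ∈ E} e_T` of the extreme rays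
(minimal incomplete case). -/
def tildeEMin (n : ℕ) (S : Finset (Fin n)) : ℝ :=
  (∑ T ∈ ESetMin n, eRay n T S) / ((ESetMin n).card : ℝ)

/-- The gap function `g^w(S) = b^w(S) - w(S)`. -/
def gapF (n : ℕ) (w : Finset (Fin n) → ℝ) (S : Finset (Fin n)) : ℝ :=
  (∑ i ∈ S, bvec n w i) - w S

/-- The τ-value of a 1-convex game: `τ_i(w) = b^w_i - g^w(N)/n`. -/
def tauVal (n : ℕ) (w : Finset (Fin n) → ℝ) (i : Fin n) : ℝ :=
  bvec n w i - gapF n w Finset.univ / (n : ℝ)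

/-- The Shapley value. -/
def shapley (n : ℕ) (w : Finset (Fin n) → ℝ) (i : Fin n) : ℝ :=
  ∑ S ∈ Finset.univ.filter (fun S : Finset (Fin n) => i ∈ S),
    ((Nat.factorial (S.card - 1) * Nat.factorial (n - S.card) : ℕ) : ℝ) /
        (Nat.factorial n : ℝ) * (w S - w (S \ {i}))

/-- The concession vector `λ^w_i = min_{S ∋ i} g^w(S)`. -/
def concession (n : ℕ) (w : Finset (Fin n) → ℝ) (i : Fin n) : ℝ :=
  (Finset.univ.filter (fun S : Finset (Fin n) => i ∈ S)).inf'
    ⟨{i}, by simp⟩ (gapF n w)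

/-- The minimal right vector `a^w = b^w - λ^w`. -/
def minRight (n : ℕ) (w : Finset (Fin n) → ℝ) (i : Fin n) : ℝ :=
  bvec n w i - concession n w i

/-- The average value `ζ̃_i(v) = v({i}) + Δ/n` of a minimal incomplete game. -/
def avgValue (n : ℕ) (v : Finset (Fin n) → ℝ) (i : Fin n) : ℝ :=
  v {i} + totalExcess n v / (n : ℝ)

/-- The zero-normalised game of a minimal incomplete game: value `Δ` on the
grand coalition and `0` on all other coalitions. -/
def zeroNorm (n : ℕ) (v : Finset (Fin n) → ℝ) (S : Finset (Fin n)) : ℝ :=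
  if S = Finset.univ then totalExcess n v else 0

/-- The upper game `v̄` for incomplete games with defined upper vector. -/
def upperGameK (n : ℕ) (K : Finset (Finset (Fin n))) (v : Finset (Fin n) → ℝ)
    (S : Finset (Fin n)) : ℝ :=
  if S ∈ K then v S else v Finset.univ - ∑ i ∈ Finset.univ \ S, bvec n v i

/-- The centre of gravity `ẽ = (1/|E|) ∑_{T ∉ K} e_T` of the extreme rays
(defined upper vector case), where `E = 2^N \ K`. -/
def tildeEK (n : ℕ) (K : Finset (Finset (Fin n))) (S : Finset (Fin n)) : ℝ :=
  (∑ T ∈ Finset.univ \ K, eRay n T S) / (((Finset.univ \ K).card : ℝ))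

lemma mem_KminF_iff {n : ℕ} {S : Finset (Fin n)} :
    S ∈ KminF n ↔ S = ∅ ∨ S = Finset.univ ∨ ∃ j, S = {j} := by
  simp [KminF, or_assoc, eq_comm]

lemma univ_mem_KminF {n : ℕ} : (Finset.univ : Finset (Fin n)) ∈ KminF n := by
  rw [mem_KminF_iff]; tauto

lemma empty_mem_KminF {n : ℕ} : (∅ : Finset (Fin n)) ∈ KminF n := by
  rw [mem_KminF_iff]; tauto

lemma singleton_mem_KminF {n : ℕ} (j : Fin n) : ({j} : Finset (Fin n)) ∈ KminF n := by
  rw [mem_KminF_iff]; exact Or.inr (Or.inr ⟨j, rfl⟩)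

lemma compl_singleton_not_mem {n : ℕ} (hn : 3 ≤ n) (j : Fin n) :
    (Finset.univ \ {j} : Finset (Fin n)) ∉ KminF n := by
  have hcard : (Finset.univ \ {j} : Finset (Fin n)).card = n - 1 := by
    rw [Finset.card_sdiff_of_subset (by simp)]; simp
  rw [mem_KminF_iff]
  rintro (h | h | ⟨k, h⟩) <;> rw [h] at hcard <;> simp [Finset.card_univ] at hcard <;> omega
lemma bvec_extGame {n : ℕ} (v : Finset (Fin n) → ℝ) (i : Fin n) (hn : 3 ≤ n) (j : Fin n) :
    bvec n (extGame n v i) j = v {j} + (if j = i then totalExcess n v else 0) := by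
  unfold bvec extGame
  rw [if_pos univ_mem_KminF, if_neg (compl_singleton_not_mem hn j)]
  have h2 : Finset.univ \ (Finset.univ \ {j}) = ({j} : Finset (Fin n)) := by simp
  rw [h2, Finset.sum_singleton]
  by_cases h : j = i
  · subst h; rw [if_neg (by simp), if_pos rfl]; ring
  · rw [if_pos (by simp [Ne.symm h]), if_neg h]; ring

lemma sum_bvec {n : ℕ} (v : Finset (Fin n) → ℝ) (i : Fin n) (hn : 3 ≤ n) (T : Finset (Fin n)) :
    ∑ j ∈ T, bvec n (extGame n v i) j
      = (∑ j ∈ T, v {j}) + (if i ∈ T then totalExcess n v else 0) := by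
  simp only [bvec_extGame v i hn, Finset.sum_add_distrib, Finset.sum_ite_eq' T i]

lemma key_eq {n : ℕ} (v : Finset (Fin n) → ℝ) (i : Fin n) (hn : 3 ≤ n)
    (S : Finset (Fin n)) (hS : S ∉ KminF n) :
    extGame n v i S = v Finset.univ - ∑ j ∈ Finset.univ \ S, bvec n (extGame n v i) j := by
  rw [sum_bvec v i hn]
  unfold extGame; rw [if_neg hS]
  by_cases h : i ∈ S
  · rw [if_pos h, if_neg (by simp [h])]; ring
  · rw [if_neg h, if_pos (by simp [h])]; ring

lemma key_singleton {n : ℕ} (v : Finset (Fin n) → ℝ) (i : Fin n) (hn : 3 ≤ n)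
    (j : Fin n) (hj : j ≠ i) :
    v {j} = v Finset.univ - ∑ k ∈ Finset.univ \ {j}, bvec n (extGame n v i) k := by
  rw [sum_bvec v i hn, if_pos (by simp [Ne.symm hj])]
  have hsum := Finset.sum_sdiff (Finset.subset_univ {j}) (f := fun k => v {k})
  rw [Finset.sum_singleton] at hsum
  unfold totalExcess
  linarith

lemma key_singleton_i {n : ℕ} (v : Finset (Fin n) → ℝ) (i : Fin n) (hn : 3 ≤ n) :
    v Finset.univ - ∑ k ∈ Finset.univ \ {i}, bvec n (extGame n v i) k
      = v {i} + totalExcess n v := by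
  rw [sum_bvec v i hn, if_neg (by simp)]
  have hsum := Finset.sum_sdiff (Finset.subset_univ {i}) (f := fun k => v {k})
  rw [Finset.sum_singleton] at hsum
  unfold totalExcess
  linarith
lemma extGame_univ {n : ℕ} (v : Finset (Fin n) → ℝ) (i : Fin n) :
    extGame n v i Finset.univ = v Finset.univ := by
  unfold extGame; rw [if_pos univ_mem_KminF]

lemma mem_Cext_of_three {n : ℕ} (v : Finset (Fin n) → ℝ) (hv : v ∅ = 0)
    (hΔ : 0 ≤ totalExcess n v) (i : Fin n) (hn : 3 ≤ n) :
    extGame n v i ∈ Cext n (KminF n) v := by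
  refine ⟨?_, ⟨?_, ?_⟩, ?_⟩
  · unfold extGame; rw [if_pos empty_mem_KminF]; exact hv
  · intro S hSne
    rw [extGame_univ]
    by_cases hS : S ∈ KminF n
    · rcases mem_KminF_iff.mp hS with rfl | rfl | ⟨j, rfl⟩
      · exact absurd hSne (by simp)
      · simp [extGame_univ]
      · have hw : extGame n v i {j} = v {j} := by
          unfold extGame; rw [if_pos (singleton_mem_KminF j)]
        rw [hw]
        by_cases h : j = i
        · rw [h]; have := key_singleton_i v i hn; linarith
        · have := key_singleton v i hn j h; linarith
    · exact le_of_eq (key_eq v i hn S hS)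
  · rw [sum_bvec v i hn, if_pos (Finset.mem_univ i), extGame_univ]
    unfold totalExcess at hΔ ⊢
    linarith
  · intro S hS; unfold extGame; rw [if_pos hS]
lemma extreme_of_three {n : ℕ} (v : Finset (Fin n) → ℝ) (hv : v ∅ = 0)
    (i : Fin n) (hn : 3 ≤ n) (x : Finset (Fin n) → ℝ)
    (hp : (fun S => extGame n v i S + x S) ∈ Cext n (KminF n) v)
    (hm : (fun S => extGame n v i S - x S) ∈ Cext n (KminF n) v) :
    x = 0 := by
  set w := extGame n v i with hw
  have hwK : ∀ S ∈ KminF n, w S = v S := by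
    intro S hS; rw [hw]; unfold extGame; rw [if_pos hS]
  have hK : ∀ S ∈ KminF n, x S = 0 := by
    intro S hS
    have h1 := hp.2.2 S hS
    simp only at h1
    have := hwK S hS
    linarith
  have hxu : x Finset.univ = 0 := hK _ univ_mem_KminF
  have hbp : ∀ j, bvec n (fun S => w S + x S) j
      = bvec n w j - x (Finset.univ \ {j}) := by
    intro j; unfold bvec; simp only; rw [hxu]; ring
  have hbm : ∀ j, bvec n (fun S => w S - x S) j
      = bvec n w j + x (Finset.univ \ {j}) := by
    intro j; unfold bvec; simp only; rw [hxu]; ring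
  set y : Fin n → ℝ := fun j => x (Finset.univ \ {j}) with hy
  -- total sum of bvec of w equals v univ
  have hbw : ∑ j : Fin n, bvec n w j = v Finset.univ := by
    rw [hw, sum_bvec v i hn, if_pos (Finset.mem_univ i)]
    unfold totalExcess; ring
  have hwu : w Finset.univ = v Finset.univ := hwK _ univ_mem_KminF
  -- total sum of y is zero
  have hty : ∑ j : Fin n, y j = 0 := by
    have h1 := hp.2.1.2
    have h2 := hm.2.1.2
    simp only [hbp, hbm, Finset.sum_add_distrib, Finset.sum_sub_distrib] at h1 h2
    rw [hxu] at h1 h2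
    have hyy : ∀ T : Finset (Fin n), ∑ j ∈ T, x (Finset.univ \ {j}) = ∑ j ∈ T, y j := by
      intro T; rfl
    rw [hyy] at h1 h2
    linarith
  -- y j = 0 for j ≠ i
  have hyj : ∀ j : Fin n, j ≠ i → y j = 0 := by
    intro j hj
    have h1 := hp.2.1.1 {j} (by simp)
    have h2 := hm.2.1.1 {j} (by simp)
    simp only at h1 h2
    have hrw : ∀ T : Finset (Fin n),
        (∑ k ∈ T, bvec n (fun S => w S + x S) k = ∑ k ∈ T, bvec n w k - ∑ k ∈ T, y k)
        ∧ (∑ k ∈ T, bvec n (fun S => w S - x S) k = ∑ k ∈ T, bvec n w k + ∑ k ∈ T, y k) := by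
      intro T
      constructor
      · rw [← Finset.sum_sub_distrib]; exact Finset.sum_congr rfl fun k _ => hbp k
      · rw [← Finset.sum_add_distrib]; exact Finset.sum_congr rfl fun k _ => hbm k
    rw [(hrw _).1] at h1
    rw [(hrw _).2] at h2
    have hks := key_singleton v i hn j hj
    rw [← hw] at hks
    have hxj : x {j} = 0 := hK _ (singleton_mem_KminF j)
    have hwj : w {j} = v {j} := hwK _ (singleton_mem_KminF j)
    -- sum over univ \ {j} of y is 0
    have hsj : ∑ k ∈ Finset.univ \ {j}, y k = 0 := by linarith
    have hsd := Finset.sum_sdiff (Finset.subset_univ {j}) (f := y)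
    rw [Finset.sum_singleton] at hsd
    linarith
  have hyi : y i = 0 := by
    have hsd := Finset.sum_sdiff (Finset.subset_univ {i}) (f := y)
    rw [Finset.sum_singleton] at hsd
    have : ∑ k ∈ Finset.univ \ {i}, y k = 0 :=
      Finset.sum_eq_zero fun k hk => hyj k (by simp at hk; exact hk)
    linarith
  have hyall : ∀ j, y j = 0 := by
    intro j; by_cases h : j = i
    · rw [h]; exact hyi
    · exact hyj j h
  funext S
  by_cases hS : S ∈ KminF n
  · exact hK S hS
  · have hSne : S.Nonempty := by
      rw [Finset.nonempty_iff_ne_empty]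
      rintro rfl; exact hS empty_mem_KminF
    have h1 := hp.2.1.1 S hSne
    have h2 := hm.2.1.1 S hSne
    simp only at h1 h2
    have hb1 : ∑ k ∈ Finset.univ \ S, bvec n (fun T => w T + x T) k
        = ∑ k ∈ Finset.univ \ S, bvec n w k := by
      refine Finset.sum_congr rfl fun k _ => ?_
      rw [hbp k]
      have := hyall k
      rw [hy] at this; simp only at this
      linarith
    have hb2 : ∑ k ∈ Finset.univ \ S, bvec n (fun T => w T - x T) k
        = ∑ k ∈ Finset.univ \ S, bvec n w k := by
      refine Finset.sum_congr rfl fun k _ => ?_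
      rw [hbm k]
      have := hyall k
      rw [hy] at this; simp only at this
      linarith
    rw [hb1] at h1
    rw [hb2] at h2
    have hke := key_eq v i hn S hS
    rw [← hw] at hke
    show x S = 0
    linarith
lemma all_mem_KminF {n : ℕ} (hn : n ≤ 2) (S : Finset (Fin n)) : S ∈ KminF n := by
  rw [mem_KminF_iff]
  have hle : S.card ≤ n := by
    have := Finset.card_le_univ S; simpa using this
  obtain h0 | h1 | h2 : S.card = 0 ∨ S.card = 1 ∨ S.card = 2 := by omega
  · exact Or.inl (Finset.card_eq_zero.mp h0)
  · exact Or.inr (Or.inr (Finset.card_eq_one.mp h1))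
  · refine Or.inr (Or.inl ?_)
    apply Finset.eq_univ_of_card
    simp; omega

lemma oneConvex_one (v : Finset (Fin 1) → ℝ) (hv : v ∅ = 0) : OneConvex 1 v := by
  have hds : (Finset.univ \ {(0 : Fin 1)} : Finset (Fin 1)) = ∅ := by decide
  constructor
  · intro S hS
    have henum : ∀ T : Finset (Fin 1), T = ∅ ∨ T = Finset.univ := by decide
    obtain rfl | rfl := henum S
    · exact absurd hS (by simp)
    · simp
  · rw [Fin.sum_univ_one]
    unfold bvec
    rw [hds, hv]
    linarith

lemma oneConvex_two (v : Finset (Fin 2) → ℝ) (hv : v ∅ = 0)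
    (hΔ : 0 ≤ totalExcess 2 v) : OneConvex 2 v := by
  have hd0 : (Finset.univ \ {(0 : Fin 2)} : Finset (Fin 2)) = {1} := by decide
  have hd1 : (Finset.univ \ {(1 : Fin 2)} : Finset (Fin 2)) = {0} := by decide
  have hΔ' : totalExcess 2 v = v Finset.univ - (v {0} + v {1}) := by
    unfold totalExcess; rw [Fin.sum_univ_two]
  constructor
  · intro S hS
    have henum : ∀ T : Finset (Fin 2),
        T = ∅ ∨ T = {0} ∨ T = {1} ∨ T = Finset.univ := by decide
    obtain rfl | rfl | rfl | rfl := henum S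
    · exact absurd hS (by simp)
    · rw [hd0, Finset.sum_singleton]
      unfold bvec; rw [hd1]; linarith
    · rw [hd1, Finset.sum_singleton]
      unfold bvec; rw [hd0]; linarith
    · simp
  · rw [Fin.sum_univ_two]
    unfold bvec
    rw [hd0, hd1]
    linarith
/-- each game `v^i` is an extreme point of the set of 1-convex
extensions of a minimal incomplete game with `Δ ≥ 0`. -/
theorem stmt_3 (n : ℕ) (v : Finset (Fin n) → ℝ) (hv : v ∅ = 0)
    (hΔ : 0 ≤ totalExcess n v) (i : Fin n) :
    extGame n v i ∈ Cext n (KminF n) v ∧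
    ∀ x : Finset (Fin n) → ℝ,
      (fun S => extGame n v i S + x S) ∈ Cext n (KminF n) v →
      (fun S => extGame n v i S - x S) ∈ Cext n (KminF n) v →
      x = 0 := by
  rcases le_or_gt 3 n with hn | hn
  · exact ⟨mem_Cext_of_three v hv hΔ i hn,
      fun x hp hm => extreme_of_three v hv i hn x hp hm⟩
  · have hn0 : n ≠ 0 := by rintro rfl; exact i.elim0
    have hall : ∀ S : Finset (Fin n), S ∈ KminF n := all_mem_KminF (by omega)
    have hext : extGame n v i = v := by
      funext S; unfold extGame; rw [if_pos (hall S)]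
    constructor
    · rw [hext]
      refine ⟨hv, ?_, fun S _ => rfl⟩
      obtain rfl | rfl : n = 1 ∨ n = 2 := by omega
      · exact oneConvex_one v hv
      · exact oneConvex_two v hv hΔ
    · intro x hp hm
      funext S
      have h1 := hp.2.2 S (hall S)
      simp only at h1
      have h2 : extGame n v i S = v S := by rw [hext]
      show x S = 0
      linarith
end
end

section
/- The average value ζ̃, defined by ζ̃_i(v) = v({i}) + Δ/n, is the unique function f from the class of 1-convex-extendable minimal incomplete games on N to ℝ^n satisfying, for all such games v, w: (1) efficiency: Σ_{i∈N} f_i(v) = v(N); (2) elementary symmetry: for all i ≠ j, v({i}) = v({j}) implies f_i(v) = f_j(v); (3) elementary additivity: f(v + w) = f(v) + f(w), where v + w is the minimal incomplete game with pointwise-summed values; (4) zero-excess axiom: if Δ_v = 0 then f_i(v) = v({i}) for all i ∈ N; (5) individual rationality: f_i(v) ≥ v({i}) for all i ∈ N. -/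
noncomputable section

open Finset

/-- The axioms of Theorem `thm:ave-value-axiom2`: efficiency, elementary
symmetry, elementary additivity, zero-excess axiom, and individual rationality. -/
def AvAxioms2 (n : ℕ) (f : (Finset (Fin n) → ℝ) → Fin n → ℝ) : Prop :=
  (∀ v, MinExtendable n v → ∑ i : Fin n, f v i = v Finset.univ) ∧
  (∀ v, MinExtendable n v → ∀ i j : Fin n, i ≠ j → v {i} = v {j} →
    f v i = f v j) ∧
  (∀ v w, MinExtendable n v → MinExtendable n w → f (v + w) = f v + f w) ∧
  (∀ v, MinExtendable n v → totalExcess n v = 0 → ∀ i : Fin n, f v i = v {i}) ∧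
  (∀ v, MinExtendable n v → ∀ i : Fin n, v {i} ≤ f v i)

/-
Subtracting the zero-normalised game `z` (worth `Δ` on `N`, `0` elsewhere) splits a game
into a zero-excess part, on which the value is forced to be `v({i})`, and `z`, whose
singletons all vanish, so symmetry and efficiency force the equal split `Δ/n`. Additivity
glues the two parts together.
-/

section Games

variable {n : ℕ} {v w : Finset (Fin n) → ℝ}

lemma totalExcess_add : totalExcess n (v + w) = totalExcess n v + totalExcess n w := by
  simp only [totalExcess, Pi.add_apply, sum_add_distrib]
  ring

lemma totalExcess_sub : totalExcess n (v - w) = totalExcess n v - totalExcess n w := by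
  simp only [totalExcess, Pi.sub_apply, sum_sub_distrib]
  ring

lemma totalExcess_eq_zero_of_singleton_eq_univ {i : Fin n} (h : ({i} : Finset (Fin n)) = univ) :
    totalExcess n v = 0 := by
  simp [totalExcess, ← h]

lemma totalExcess_eq_zero_of_empty_eq_univ (hv : v ∅ = 0) (h : (∅ : Finset (Fin n)) = univ) :
    totalExcess n v = 0 := by
  simp [totalExcess, ← h, hv]

lemma zeroNorm_univ : zeroNorm n v univ = totalExcess n v := by
  simp [zeroNorm]

lemma zeroNorm_singleton (i : Fin n) : zeroNorm n v {i} = 0 := by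
  by_cases h : ({i} : Finset (Fin n)) = univ
  · simp [zeroNorm, h, totalExcess_eq_zero_of_singleton_eq_univ h]
  · simp [zeroNorm, h]

lemma zeroNorm_empty (hv : v ∅ = 0) : zeroNorm n v ∅ = 0 := by
  by_cases h : (∅ : Finset (Fin n)) = univ
  · rw [h, zeroNorm_univ]
    exact totalExcess_eq_zero_of_empty_eq_univ hv h
  · simp [zeroNorm, h]

lemma totalExcess_zeroNorm : totalExcess n (zeroNorm n v) = totalExcess n v := by
  simp [totalExcess, zeroNorm_univ, zeroNorm_singleton]

lemma totalExcess_sub_zeroNorm : totalExcess n (v - zeroNorm n v) = 0 := by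
  rw [totalExcess_sub, totalExcess_zeroNorm, sub_self]

lemma MinExtendable.sub_zeroNorm (hv : MinExtendable n v) :
    MinExtendable n (v - zeroNorm n v) :=
  ⟨by simp [hv.1, zeroNorm_empty hv.1], totalExcess_sub_zeroNorm.ge⟩

lemma MinExtendable.zeroNorm (hv : MinExtendable n v) : MinExtendable n (zeroNorm n v) :=
  ⟨zeroNorm_empty hv.1, totalExcess_zeroNorm (v := v) ▸ hv.2⟩

end Games

lemma avAxioms2_avgValue (n : ℕ) : AvAxioms2 n (avgValue n) := by
  refine ⟨fun v hv => ?_, fun v _ i j _ h => by simp [avgValue, h],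
    fun v w _ _ => ?_, fun v _ h i => by simp [avgValue, h], fun v hv i => ?_⟩
  · rcases Nat.eq_zero_or_pos n with rfl | hn
    · simp [univ_eq_empty, hv.1]
    · simp only [avgValue, sum_add_distrib, sum_const, card_univ, Fintype.card_fin,
        nsmul_eq_mul]
      rw [mul_div_cancel₀ _ (by positivity), totalExcess, add_sub_cancel]
  · ext i
    simp only [avgValue, totalExcess_add, Pi.add_apply]
    ring
  · simpa [avgValue] using div_nonneg hv.2 n.cast_nonneg

namespace AvAxioms2

variable {n : ℕ} {f : (Finset (Fin n) → ℝ) → Fin n → ℝ} {v : Finset (Fin n) → ℝ}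

lemma apply_zeroNorm (hf : AvAxioms2 n f) (hv : MinExtendable n v) (i : Fin n) :
    f (zeroNorm n v) i = totalExcess n v / n := by
  have hz := hv.zeroNorm
  have hconst : ∀ j, f (zeroNorm n v) j = f (zeroNorm n v) i := fun j => by
    rcases eq_or_ne j i with rfl | hji
    · rfl
    · exact hf.2.1 _ hz j i hji (by rw [zeroNorm_singleton, zeroNorm_singleton])
  have hsum := hf.1 _ hz
  simp only [hconst, sum_const, card_univ, Fintype.card_fin, nsmul_eq_mul,
    zeroNorm_univ] at hsum
  have hn : (n : ℝ) ≠ 0 := Nat.cast_ne_zero.2 (Fin.pos i).ne'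
  rw [← hsum, mul_div_cancel_left₀ _ hn]

lemma eq_avgValue (hf : AvAxioms2 n f) (hv : MinExtendable n v) (i : Fin n) :
    f v i = avgValue n v i := by
  have hsplit : f v = f (v - zeroNorm n v) + f (zeroNorm n v) := by
    rw [← hf.2.2.1 _ _ hv.sub_zeroNorm hv.zeroNorm, sub_add_cancel]
  rw [hsplit, Pi.add_apply, hf.2.2.2.1 _ hv.sub_zeroNorm totalExcess_sub_zeroNorm,
    hf.apply_zeroNorm hv, Pi.sub_apply, zeroNorm_singleton, sub_zero, avgValue]

end AvAxioms2

theorem stmt_12_general (n : ℕ) :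
    AvAxioms2 n (avgValue n) ∧
    ∀ f : (Finset (Fin n) → ℝ) → Fin n → ℝ, AvAxioms2 n f →
      ∀ v, MinExtendable n v → ∀ i : Fin n, f v i = avgValue n v i :=
  ⟨avAxioms2_avgValue n, fun _ hf _ hv i => hf.eq_avgValue hv i⟩

/-- the average value `ζ̃_i(v) = v({i}) + Δ/n` is the unique value
on 1-convex-extendable minimal incomplete games satisfying efficiency,
elementary symmetry, elementary additivity, the zero-excess axiom and
individual rationality. -/
theorem stmt_12 (n : ℕ) (hn : 0 < n) :
    AvAxioms2 n (avgValue n) ∧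
    ∀ f : (Finset (Fin n) → ℝ) → Fin n → ℝ, AvAxioms2 n f →
      ∀ v, MinExtendable n v → ∀ i : Fin n, f v i = avgValue n v i :=
  stmt_12_general n
end
end
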